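/- arXiv:1007.3355 — 2 statements merged into one kernel-verified Lean document; each statement's English description precedes it below -/
import Mathlib

section
/- Let X be a topological space, regarded as an X-space via the identity map, and let Δ² denote the standard topological 2-simplex. Let Simp₂X be the quotient of Δ² × C(Δ², X) by the relations (p, σ) ∼ (p, σ') whenever p is a vertex of Δ² and σ(p) = σ'(p), regarded as an X-space via (p, σ) ↦ σ(p). Then Simp₂X is homotopy equivalent over X to the iterated fiberwise join X *_X (X *_X X), by a homotopy equivalence whose maps and homotopies are maps over X. -/
/-!
STATEMENT 2: `Simp₂X`, the quotient of `Δ² × C(Δ², X)` identifying maps at vertices,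
is homotopy equivalent over `X` to the iterated fiberwise join `X *_X (X *_X X)`.
-/

open unitInterval

variable {X Y Z : Type} [TopologicalSpace X] [TopologicalSpace Y] [TopologicalSpace Z]

/-- The space of tuples `(t, γ, y, z)` with `γ 0 = pY y` and `γ 1 = pZ z`. -/
abbrev JoinPre (pY : C(Y, X)) (pZ : C(Z, X)) : Type _ :=
  {q : unitInterval × C(unitInterval, X) × Y × Z //
    q.2.1 0 = pY q.2.2.1 ∧ q.2.1 1 = pZ q.2.2.2}

/-- The edge identifications defining the fiberwise join. -/
def JoinRel (pY : C(Y, X)) (pZ : C(Z, X)) (a b : JoinPre pY pZ) : Prop :=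
  (a.1.1 = 0 ∧ b.1.1 = 0 ∧ a.1.2.2.1 = b.1.2.2.1) ∨
  (a.1.1 = 1 ∧ b.1.1 = 1 ∧ a.1.2.2.2 = b.1.2.2.2)

/-- The fiberwise join `Y *_X Z`. -/
abbrev FibJoin (pY : C(Y, X)) (pZ : C(Z, X)) : Type _ := Quot (JoinRel pY pZ)

/-- The structure map `Y *_X Z → X`: evaluation at the distinguished point. -/
noncomputable def fibJoinProj (pY : C(Y, X)) (pZ : C(Z, X)) : C(FibJoin pY pZ, X) where
  toFun := Quot.lift (fun q => q.1.2.1 q.1.1) (by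
    rintro a b (⟨ha, hb, h⟩ | ⟨ha, hb, h⟩)
    · show a.1.2.1 a.1.1 = b.1.2.1 b.1.1
      rw [ha, hb, a.2.1, b.2.1, h]
    · show a.1.2.1 a.1.1 = b.1.2.1 b.1.1
      rw [ha, hb, a.2.2, b.2.2, h])
  continuous_toFun := by
    apply continuous_quot_lift
    exact continuous_eval.comp
      (by fun_prop : Continuous fun q : JoinPre pY pZ => (q.1.2.1, q.1.1))


/-- The standard topological 2-simplex. -/
abbrev Delta2 : Type := ↥(stdSimplex ℝ (Fin 3))

/-- The identifications defining `Simp₂X`: `(p, σ) ∼ (p, σ')` whenever `p` is a vertex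
of `Δ²` and `σ p = σ' p`. -/
def Simp2Rel (X : Type) [TopologicalSpace X] (a b : Delta2 × C(Delta2, X)) : Prop :=
  a.1 = b.1 ∧ (∃ i : Fin 3, (a.1 : Fin 3 → ℝ) = Pi.single i 1) ∧ a.2 a.1 = b.2 b.1

/-- The space of "pointed singular 2-simplices" in `X`, with edge identifications. -/
abbrev Simp2 (X : Type) [TopologicalSpace X] : Type := Quot (Simp2Rel X)

/-- The structure map `Simp₂X → X`, `(p, σ) ↦ σ p`. -/
noncomputable def simp2Proj (X : Type) [TopologicalSpace X] : C(Simp2 X, X) where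
  toFun := Quot.lift (fun a => a.2 a.1) (fun _ _ h => h.2.2)
  continuous_toFun := by
    apply continuous_quot_lift
    exact continuous_eval.comp
      (by fun_prop : Continuous fun a : Delta2 × C(Delta2, X) => (a.2, a.1))

/-!
Write a point of `Δ²` as the join `ofJoin t l = (1 - t, t - l, l)` of the vertex `e₀` with a point
of the opposite edge. A pointed simplex `(p, σ)` then gives `[t, γ, [l, δ]]` in
`X *_X (X *_X X)`, where `γ` is `σ` along the segment from `e₀` through `p` to the opposite edge
and `δ` is `σ` on that edge. Conversely `[t, γ, [u, δ]]` gives the point `ofJoin t (t u)` of a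
simplex that reads `γ` off the join parameter alone and forgets `δ`. Both round trips are
homotopic to the identity over `X` by affine reparametrisations; on `X *_X (X *_X X)` the
homotopy ends at the map making the inner path constant, which is homotopic to the identity by
shrinking the inner path onto its distinguished point.
-/

open Set ContinuousMap

local notation "clampI" => Set.projIcc (0 : ℝ) 1 zero_le_one

@[fun_prop]
lemma ContinuousMap.continuous_mk_of_continuous_uncurry {α β γ : Type*} [TopologicalSpace α]
    [TopologicalSpace β] [TopologicalSpace γ] {f : α → β → γ} {hf : ∀ a, Continuous (f a)}
    (h : Continuous fun p : α × β => f p.1 p.2) : Continuous fun a => (⟨f a, hf a⟩ : C(β, γ)) :=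
  continuous_of_continuous_uncurry _ h

section QuotLift

variable {A B : Type*} [TopologicalSpace A] [TopologicalSpace B] {r : A → A → Prop}

def ContinuousMap.quotLift (F : A → B) (hF : Continuous F) (hr : ∀ a b, r a b → F a = F b) :
    C(Quot r, B) :=
  ⟨Quot.lift F hr, continuous_quot_lift hr hF⟩

@[simp]
lemma ContinuousMap.quotLift_mk (F : A → B) (hF : Continuous F) (hr : ∀ a b, r a b → F a = F b)
    (a : A) : quotLift F hF hr (Quot.mk r a) = F a :=
  rfl

/-- Continuity in both variables holds because `I` is locally compact. -/
def ContinuousMap.Homotopy.quotLift {f₀ f₁ : C(Quot r, B)} (F : I → A → B)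
    (hF : Continuous fun p : I × A => F p.1 p.2) (hr : ∀ s a b, r a b → F s a = F s b)
    (h₀ : ∀ a, F 0 a = f₀ (Quot.mk r a)) (h₁ : ∀ a, F 1 a = f₁ (Quot.mk r a)) :
    f₀.Homotopy f₁ where
  toFun p := Quot.lift (F p.1) (hr p.1) p.2
  continuous_toFun := isQuotientMap_quot_mk.continuous_lift_prod_right hF
  map_zero_left := Quot.ind h₀
  map_one_left := Quot.ind h₁

end QuotLift

noncomputable section

namespace Delta2

@[fun_prop]
lemma continuous_coord {α : Type*} [TopologicalSpace α] {f : α → Delta2} (hf : Continuous f)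
    (i : Fin 3) : Continuous fun a => (f a).1 i :=
  (continuous_apply i).comp (continuous_subtype_val.comp hf)

lemma coord_nonneg (p : Delta2) (i : Fin 3) : 0 ≤ p.1 i :=
  p.2.1 i

lemma sum_coord (p : Delta2) : p.1 0 + p.1 1 + p.1 2 = 1 := by
  simpa [Fin.sum_univ_three] using p.2.2

abbrev vertex (i : Fin 3) : Delta2 :=
  stdSimplex.vertex i

lemma coe_eq_single_iff {p : Delta2} {i : Fin 3} :
    (p : Fin 3 → ℝ) = Pi.single i 1 ↔ p = vertex i :=
  ⟨fun h => Subtype.ext h, fun h => h ▸ rfl⟩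

def joinParam (p : Delta2) : I :=
  ⟨p.1 1 + p.1 2, by linarith [coord_nonneg p 1, coord_nonneg p 2],
    by linarith [sum_coord p, coord_nonneg p 0]⟩

def lam2 (p : Delta2) : I :=
  ⟨p.1 2, coord_nonneg p 2, by linarith [sum_coord p, coord_nonneg p 0, coord_nonneg p 1]⟩

@[fun_prop]
lemma continuous_joinParam : Continuous joinParam :=
  Continuous.subtype_mk (by fun_prop) _

@[fun_prop]
lemma continuous_lam2 : Continuous lam2 :=
  Continuous.subtype_mk (by fun_prop) _

lemma lam2_le_joinParam (p : Delta2) : (lam2 p : ℝ) ≤ joinParam p := by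
  simp only [lam2, joinParam]
  linarith [coord_nonneg p 1]

@[simp]
lemma joinParam_vertex_zero : joinParam (vertex 0) = 0 :=
  Subtype.ext (by simp [joinParam])

@[simp]
lemma joinParam_vertex_one : joinParam (vertex 1) = 1 :=
  Subtype.ext (by simp [joinParam])

@[simp]
lemma joinParam_vertex_two : joinParam (vertex 2) = 1 :=
  Subtype.ext (by simp [joinParam])

@[simp]
lemma lam2_vertex_one : lam2 (vertex 1) = 0 :=
  Subtype.ext (by simp [lam2])

@[simp]
lemma lam2_vertex_two : lam2 (vertex 2) = 1 :=
  Subtype.ext (by simp [lam2])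

/-- The point `(1 - t, t - l, l)`, after clamping `t` to `[0, 1]` and then `l` to `[0, t]`, so that
no side conditions are needed; it is the inverse of `p ↦ (joinParam p, lam2 p)`. -/
def ofJoin (t l : ℝ) : Delta2 :=
  ⟨![1 - clampI t, clampI t - max 0 (min l (clampI t)), max 0 (min l (clampI t))], by
    have h₀ := (clampI t).2.1
    have h₁ := (clampI t).2.2
    refine ⟨fun i => ?_, ?_⟩
    · fin_cases i <;> simp <;> grind
    · simp [Fin.sum_univ_three]⟩

@[fun_prop]
lemma continuous_ofJoin {α : Type*} [TopologicalSpace α] {f g : α → ℝ} (hf : Continuous f)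
    (hg : Continuous g) : Continuous fun a => ofJoin (f a) (g a) := by
  refine Continuous.subtype_mk (continuous_pi fun i => ?_) _
  fin_cases i <;> simp <;> fun_prop

@[simp]
lemma joinParam_ofJoin (t l : ℝ) : joinParam (ofJoin t l) = clampI t :=
  Subtype.ext (by simp [joinParam, ofJoin])

lemma lam2_ofJoin {t l : ℝ} (hl : 0 ≤ l) (hlt : l ≤ t) (ht : t ≤ 1) :
    (lam2 (ofJoin t l) : ℝ) = l := by
  simp [lam2, ofJoin, projIcc_of_mem _ ⟨hl.trans hlt, ht⟩, hl, hlt]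

@[simp]
lemma ofJoin_clamp (t l : ℝ) : ofJoin (clampI t) l = ofJoin t l := by
  simp [ofJoin]

@[simp]
lemma ofJoin_joinParam_lam2 (p : Delta2) : ofJoin (joinParam p) (lam2 p) = p := by
  refine Subtype.ext (funext fun i => ?_)
  simp only [ofJoin, projIcc_val, min_eq_left (lam2_le_joinParam p), max_eq_right (lam2 p).2.1]
  fin_cases i <;> simp [joinParam, lam2]
  linarith [sum_coord p]

lemma ofJoin_zero (l : ℝ) : ofJoin 0 l = vertex 0 := by
  refine Subtype.ext (funext fun i => ?_)
  fin_cases i <;> simp [ofJoin]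

lemma ofJoin_one_zero : ofJoin 1 0 = vertex 1 := by
  refine Subtype.ext (funext fun i => ?_)
  fin_cases i <;> simp [ofJoin]

lemma ofJoin_one_one : ofJoin 1 1 = vertex 2 := by
  refine Subtype.ext (funext fun i => ?_)
  fin_cases i <;> simp [ofJoin]

end Delta2

namespace FibJoin

variable {pY : C(Y, X)} {pZ : C(Z, X)}

@[simp]
lemma fibJoinProj_mk (q : JoinPre pY pZ) : fibJoinProj pY pZ (Quot.mk _ q) = q.1.2.1 q.1.1 :=
  rfl

def param : C(FibJoin pY pZ, I) :=
  quotLift (fun q => q.1.1) (by fun_prop) (by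
    rintro a b (⟨ha, hb, -⟩ | ⟨ha, hb, -⟩) <;> rw [ha, hb])

variable {Z' : Type} [TopologicalSpace Z'] {pZ' : C(Z', X)}

def mapRight (φ : C(Z, Z')) (hφ : ∀ z, pZ' (φ z) = pZ z) :
    C(FibJoin pY pZ, FibJoin pY pZ') :=
  quotLift (fun q => Quot.mk _ ⟨(q.1.1, q.1.2.1, q.1.2.2.1, φ q.1.2.2.2), q.2.1,
      q.2.2.trans (hφ _).symm⟩) (by fun_prop) (by
    rintro a b (h | ⟨ha, hb, hz⟩)
    · exact Quot.sound (Or.inl h)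
    · exact Quot.sound (Or.inr ⟨ha, hb, congrArg φ hz⟩))

lemma mapRight_id :
    mapRight (ContinuousMap.id Z) (fun _ => rfl) = ContinuousMap.id (FibJoin pY pZ) := by
  ext x
  induction x using Quot.ind
  rfl

def homotopyMapRight {φ₀ φ₁ : C(Z, Z')} (F : φ₀.Homotopy φ₁)
    (hF : ∀ s z, pZ' (F (s, z)) = pZ z) :
    (mapRight (pY := pY) φ₀ fun z => by simpa using hF 0 z).Homotopy
      (mapRight φ₁ fun z => by simpa using hF 1 z) :=
  .quotLift (fun s q => Quot.mk _ ⟨(q.1.1, q.1.2.1, q.1.2.2.1, F (s, q.1.2.2.2)), q.2.1,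
      q.2.2.trans (hF s _).symm⟩) (by fun_prop)
    (by
      rintro s a b (h | ⟨ha, hb, hz⟩)
      · exact Quot.sound (Or.inl h)
      · exact Quot.sound (Or.inr ⟨ha, hb, congrArg (fun z => F (s, z)) hz⟩))
    (by simp [mapRight]) (by simp [mapRight])

lemma fibJoinProj_homotopyMapRight {φ₀ φ₁ : C(Z, Z')} (F : φ₀.Homotopy φ₁)
    (hF : ∀ s z, pZ' (F (s, z)) = pZ z) (s : I) (x : FibJoin pY pZ) :
    fibJoinProj pY pZ' (homotopyMapRight F hF (s, x)) = fibJoinProj pY pZ x := by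
  induction x using Quot.ind
  rfl

end FibJoin

abbrev FibJoin2 (X : Type) [TopologicalSpace X] : Type :=
  FibJoin (ContinuousMap.id X) (ContinuousMap.id X)

abbrev FibJoin3 (X : Type) [TopologicalSpace X] : Type :=
  FibJoin (ContinuousMap.id X) (fibJoinProj (ContinuousMap.id X) (ContinuousMap.id X))

namespace FibJoin2

/-- Over the identity maps, the two outer coordinates are the endpoints of the path. -/
def mk (u : I) (δ : C(I, X)) : FibJoin2 X :=
  Quot.mk _ ⟨(u, δ, δ 0, δ 1), rfl, rfl⟩

@[fun_prop]
lemma continuous_mk {α : Type*} [TopologicalSpace α] {u : α → I} {δ : α → C(I, X)}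
    (hu : Continuous u) (hδ : Continuous δ) : Continuous fun a => mk (u a) (δ a) :=
  continuous_quot_mk.comp (by fun_prop)

lemma quot_mk_eq_mk (q : JoinPre (ContinuousMap.id X) (ContinuousMap.id X)) :
    Quot.mk _ q = mk q.1.1 q.1.2.1 := by
  obtain ⟨⟨u, δ, y, z⟩, h₀, h₁⟩ := q
  change δ 0 = y at h₀
  change δ 1 = z at h₁
  subst h₀ h₁
  rfl

lemma mk_zero_eq {δ δ' : C(I, X)} (h : δ 0 = δ' 0) : mk 0 δ = mk 0 δ' :=
  Quot.sound (Or.inl ⟨rfl, rfl, h⟩)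

lemma mk_one_eq {δ δ' : C(I, X)} (h : δ 1 = δ' 1) : mk 1 δ = mk 1 δ' :=
  Quot.sound (Or.inr ⟨rfl, rfl, h⟩)

def collapse : C(FibJoin2 X, FibJoin2 X) :=
  ⟨fun z => mk (FibJoin.param z) (.const I (fibJoinProj _ _ z)), by fun_prop⟩

lemma fibJoinProj_collapse (z : FibJoin2 X) :
    fibJoinProj _ _ (collapse z) = fibJoinProj _ _ z :=
  rfl

def shrinkPath (s u : I) (δ : C(I, X)) : C(I, X) :=
  ⟨fun w => δ (clampI ((1 - s) * u + s * w)), by fun_prop⟩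

@[simp]
lemma shrinkPath_apply (s u : I) (δ : C(I, X)) (w : I) :
    shrinkPath s u δ w = δ (clampI ((1 - s) * u + s * w)) :=
  rfl

@[simp]
lemma shrinkPath_one (u : I) (δ : C(I, X)) : shrinkPath 1 u δ = δ := by
  ext w
  simp

def collapseHomotopy : (collapse (X := X)).Homotopy (ContinuousMap.id _) :=
  .quotLift (fun s q => mk q.1.1 (shrinkPath s q.1.1 q.1.2.1)) (by unfold shrinkPath; fun_prop)
    (by
      rintro s a b (⟨ha, hb, h⟩ | ⟨ha, hb, h⟩)
      · rw [ha, hb]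
        exact mk_zero_eq (by simpa [a.2.1, b.2.1] using h)
      · rw [ha, hb]
        exact mk_one_eq (by simpa [a.2.2, b.2.2] using h))
    (fun q => congrArg (mk _) (ContinuousMap.ext fun w => by simp))
    (fun q => by simp [quot_mk_eq_mk])

lemma fibJoinProj_collapseHomotopy (s : I) (z : FibJoin2 X) :
    fibJoinProj _ _ (collapseHomotopy (s, z)) = fibJoinProj _ _ z := by
  induction z using Quot.ind with
  | mk q => exact congrArg q.1.2.1 (by simp [← add_mul])

end FibJoin2

namespace FibJoin3

def mk (t : I) (γ : C(I, X)) (z : FibJoin2 X) (h : γ 1 = fibJoinProj _ _ z) : FibJoin3 X :=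
  Quot.mk _ ⟨(t, γ, γ 0, z), rfl, h⟩

@[fun_prop]
lemma continuous_mk {α : Type*} [TopologicalSpace α] {t : α → I} {γ : α → C(I, X)}
    {z : α → FibJoin2 X} {h : ∀ a, γ a 1 = fibJoinProj _ _ (z a)} (ht : Continuous t)
    (hγ : Continuous γ) (hz : Continuous z) : Continuous fun a => mk (t a) (γ a) (z a) (h a) :=
  continuous_quot_mk.comp (by fun_prop)

lemma mk_congr {t t' : I} {γ γ' : C(I, X)} {z z' : FibJoin2 X} {h h'} (ht : t = t')
    (hγ : γ = γ') (hz : z = z') : mk t γ z h = mk t' γ' z' h' := by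
  subst ht hγ hz
  rfl

lemma mk_zero_eq {γ γ' : C(I, X)} {z z' : FibJoin2 X} {h h'} (hγ : γ 0 = γ' 0) :
    mk 0 γ z h = mk 0 γ' z' h' :=
  Quot.sound (Or.inl ⟨rfl, rfl, hγ⟩)

lemma mk_one_eq {γ γ' : C(I, X)} {z z' : FibJoin2 X} {h h'} (hz : z = z') :
    mk 1 γ z h = mk 1 γ' z' h' :=
  Quot.sound (Or.inr ⟨rfl, rfl, hz⟩)

end FibJoin3

namespace Simp2

open Delta2

@[simp]
lemma simp2Proj_mk (a : Delta2 × C(Delta2, X)) : simp2Proj X (Quot.mk _ a) = a.2 a.1 :=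
  rfl

def toFibJoin3Rep (a : Delta2 × C(Delta2, X)) : FibJoin3 X :=
  FibJoin3.mk (joinParam a.1) ⟨fun v => a.2 (ofJoin v (lam2 a.1)), by fun_prop⟩
    (FibJoin2.mk (lam2 a.1) ⟨fun w => a.2 (ofJoin 1 w), by fun_prop⟩) rfl

def toFibJoin3 : C(Simp2 X, FibJoin3 X) :=
  quotLift toFibJoin3Rep (by unfold toFibJoin3Rep; fun_prop) (by
    rintro ⟨p, φ⟩ ⟨_, φ'⟩ ⟨rfl, ⟨i, hi⟩, h⟩
    rw [coe_eq_single_iff] at hi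
    subst hi
    fin_cases i
    · simp only [toFibJoin3Rep, Fin.zero_eta, joinParam_vertex_zero]
      exact FibJoin3.mk_zero_eq (by simpa [ofJoin_zero] using h)
    · simp only [toFibJoin3Rep, Fin.mk_one, joinParam_vertex_one, lam2_vertex_one]
      exact FibJoin3.mk_one_eq (FibJoin2.mk_zero_eq (by simpa [ofJoin_one_zero] using h))
    · simp only [toFibJoin3Rep, Fin.reduceFinMk, joinParam_vertex_two, lam2_vertex_two]
      exact FibJoin3.mk_one_eq (FibJoin2.mk_one_eq (by simpa [ofJoin_one_one] using h)))

@[simp]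
lemma toFibJoin3_mk (a : Delta2 × C(Delta2, X)) : toFibJoin3 (Quot.mk _ a) = toFibJoin3Rep a :=
  rfl

lemma fibJoinProj_toFibJoin3 (a : Simp2 X) :
    fibJoinProj _ _ (toFibJoin3 a) = simp2Proj X a := by
  induction a using Quot.ind with
  | mk a => exact congrArg a.2 (ofJoin_joinParam_lam2 a.1)

end Simp2

namespace FibJoin3

open Delta2

/-- At `t = 0` this is `γ 0` at the vertex `e₀`, and at `t = 1` it is constant, as the
identifications on both sides require. -/
def simplexOfPath (t : I) (γ : C(I, X)) : C(Delta2, X) :=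
  ⟨fun μ => γ (clampI (t + (joinParam μ - t) * (1 - t))), by fun_prop⟩

@[simp]
lemma simplexOfPath_apply (t : I) (γ : C(I, X)) (μ : Delta2) :
    simplexOfPath t γ μ = γ (clampI (t + (joinParam μ - t) * (1 - t))) :=
  rfl

def toSimp2Rep (t : I) (γ : C(I, X)) (u : I) : Simp2 X :=
  Quot.mk _ (ofJoin t (t * u), simplexOfPath t γ)

lemma toSimp2Rep_zero {γ γ' : C(I, X)} (u u' : I) (h : γ 0 = γ' 0) :
    toSimp2Rep 0 γ u = toSimp2Rep 0 γ' u' :=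
  Quot.sound ⟨by simp [ofJoin_zero], ⟨0, by simp [ofJoin_zero]⟩, by simpa [ofJoin_zero] using h⟩

lemma toSimp2Rep_one {γ γ' : C(I, X)} (u : I) (h : γ 1 = γ' 1) :
    toSimp2Rep 1 γ u = toSimp2Rep 1 γ' u := by
  have : simplexOfPath 1 γ = simplexOfPath 1 γ' := by
    ext μ
    simpa using h
  rw [toSimp2Rep, this, toSimp2Rep]

def toSimp2 : C(FibJoin3 X, Simp2 X) :=
  quotLift (fun q => toSimp2Rep q.1.1 q.1.2.1 (FibJoin.param q.1.2.2.2))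
    (by unfold toSimp2Rep simplexOfPath; fun_prop) (by
      rintro a b (⟨ha, hb, h⟩ | ⟨ha, hb, h⟩)
      · rw [ha, hb]
        exact toSimp2Rep_zero _ _ (by simpa [a.2.1, b.2.1] using h)
      · rw [ha, hb, h]
        exact toSimp2Rep_one _ (a.2.2.trans (h ▸ b.2.2.symm)))

@[simp]
lemma toSimp2_mk (q : JoinPre (ContinuousMap.id X) (fibJoinProj _ _)) :
    toSimp2 (Quot.mk _ q) = toSimp2Rep q.1.1 q.1.2.1 (FibJoin.param q.1.2.2.2) :=
  rfl

lemma simp2Proj_toSimp2 (x : FibJoin3 X) : simp2Proj X (toSimp2 x) = fibJoinProj _ _ x := by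
  induction x using Quot.ind with
  | mk q => simp [toSimp2Rep]

end FibJoin3

namespace Delta2

/-! `toSimp2 (toFibJoin3 [p, σ])` is `[ofJoin t (t l), σ ∘ reparamHomotopy 0 p]`, where
`p = ofJoin t l`. The homotopy to `[p, σ]` moves the point along `pointHomotopy s p`, which fixes
the vertices, and precomposes `σ` with `reparamHomotopy s p`, which sends `pointHomotopy s p`
to `p`. -/

def pointHomotopy (s : I) (p : Delta2) : Delta2 :=
  ofJoin (joinParam p) (lam2 p * ((1 - s) * joinParam p + s))

def reparamHomotopy (s : I) (p μ : Delta2) : Delta2 :=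
  ofJoin (joinParam p + (joinParam μ - joinParam p) * (1 - (1 - s) * joinParam p))
    (lam2 p + s * (lam2 μ - lam2 p * ((1 - s) * joinParam p + s)))

@[fun_prop]
lemma continuous_pointHomotopy {α : Type*} [TopologicalSpace α] {s : α → I} {p : α → Delta2}
    (hs : Continuous s) (hp : Continuous p) : Continuous fun a => pointHomotopy (s a) (p a) := by
  unfold pointHomotopy
  fun_prop

@[fun_prop]
lemma continuous_reparamHomotopy {α : Type*} [TopologicalSpace α] {s : α → I}
    {p μ : α → Delta2} (hs : Continuous s) (hp : Continuous p) (hμ : Continuous μ) :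
    Continuous fun a => reparamHomotopy (s a) (p a) (μ a) := by
  unfold reparamHomotopy
  fun_prop

lemma reparamHomotopy_pointHomotopy (s : I) (p : Delta2) :
    reparamHomotopy s p (pointHomotopy s p) = p := by
  have hρ₀ : 0 ≤ (1 - s) * joinParam p + (s : ℝ) := by
    nlinarith [s.2.1, s.2.2, (joinParam p).2.1]
  have hρ₁ : (1 - s) * joinParam p + (s : ℝ) ≤ 1 := by
    nlinarith [s.2.1, s.2.2, (joinParam p).2.2]
  have hl : (lam2 p : ℝ) * ((1 - s) * joinParam p + s) ≤ joinParam p :=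
    (mul_le_of_le_one_right (lam2 p).2.1 hρ₁).trans (lam2_le_joinParam p)
  rw [reparamHomotopy, pointHomotopy,
    lam2_ofJoin (mul_nonneg (lam2 p).2.1 hρ₀) hl (joinParam p).2.2]
  simp

lemma pointHomotopy_vertex (s : I) (i : Fin 3) : pointHomotopy s (vertex i) = vertex i := by
  fin_cases i <;> simp [pointHomotopy, ofJoin_zero, ofJoin_one_zero, ofJoin_one_one]

lemma pointHomotopy_zero (p : Delta2) :
    pointHomotopy 0 p = ofJoin (joinParam p) (joinParam p * lam2 p) := by
  simp [pointHomotopy, mul_comm]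

@[simp]
lemma pointHomotopy_one (p : Delta2) : pointHomotopy 1 p = p := by
  simp [pointHomotopy]

lemma reparamHomotopy_zero (p μ : Delta2) :
    reparamHomotopy 0 p μ =
      ofJoin (clampI (joinParam p + (joinParam μ - joinParam p) * (1 - joinParam p))) (lam2 p) := by
  simp [reparamHomotopy]

@[simp]
lemma reparamHomotopy_one (p μ : Delta2) : reparamHomotopy 1 p μ = μ := by
  simp [reparamHomotopy]

end Delta2

namespace Simp2

open Delta2

def roundTripHomotopy :
    (FibJoin3.toSimp2.comp toFibJoin3).Homotopy (ContinuousMap.id (Simp2 X)) :=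
  .quotLift (fun s a => Quot.mk _ (pointHomotopy s a.1,
      ⟨fun μ => a.2 (reparamHomotopy s a.1 μ), by fun_prop⟩))
    (by fun_prop)
    (by
      rintro s ⟨p, φ⟩ ⟨_, φ'⟩ ⟨rfl, ⟨i, hi⟩, h⟩
      rw [coe_eq_single_iff] at hi
      subst hi
      exact Quot.sound ⟨rfl, ⟨i, by rw [pointHomotopy_vertex]; rfl⟩,
        by simpa [reparamHomotopy_pointHomotopy] using h⟩)
    (fun a => congrArg (Quot.mk _) (Prod.ext (pointHomotopy_zero a.1)
      (ContinuousMap.ext fun μ => congrArg a.2 (reparamHomotopy_zero a.1 μ))))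
    (fun a => congrArg (Quot.mk _) (Prod.ext (pointHomotopy_one a.1)
      (ContinuousMap.ext fun μ => congrArg a.2 (reparamHomotopy_one a.1 μ))))

lemma simp2Proj_roundTripHomotopy (s : I) (x : Simp2 X) :
    simp2Proj X (roundTripHomotopy (s, x)) = simp2Proj X x := by
  induction x using Quot.ind with
  | mk a => exact congrArg a.2 (reparamHomotopy_pointHomotopy s a.1)

end Simp2

namespace FibJoin3

open Delta2

def mkCollapsed (t : I) (γ : C(I, X)) (u : I) : FibJoin3 X :=
  mk t γ (FibJoin2.mk u (.const I (γ 1))) rfl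

lemma mapRight_collapse_mk (q : JoinPre (ContinuousMap.id X) (fibJoinProj _ _)) :
    FibJoin.mapRight FibJoin2.collapse FibJoin2.fibJoinProj_collapse (Quot.mk _ q) =
      mkCollapsed q.1.1 q.1.2.1 (FibJoin.param q.1.2.2.2) := by
  obtain ⟨⟨t, γ, x, z⟩, h₀, h₁⟩ := q
  change γ 0 = x at h₀
  change γ 1 = fibJoinProj _ _ z at h₁
  subst h₀
  simp only [mkCollapsed, h₁]
  rfl

/-- The path of `toFibJoin3 (toSimp2 [t, γ, z])` is `γ` reparametrised by
`v ↦ t + (v - t) (1 - t)`; this interpolates linearly to the identity, keeping `t` fixed. -/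
def reparamPath (t s : I) (γ : C(I, X)) : C(I, X) :=
  ⟨fun v => γ (clampI ((1 - s) * (t + (v - t) * (1 - t)) + s * v)), by fun_prop⟩

@[simp]
lemma reparamPath_apply (t s : I) (γ : C(I, X)) (v : I) :
    reparamPath t s γ v = γ (clampI ((1 - s) * (t + (v - t) * (1 - t)) + s * v)) :=
  rfl

lemma toFibJoin3_toSimp2Rep (t : I) (γ : C(I, X)) (u : I) :
    Simp2.toFibJoin3 (toSimp2Rep t γ u) = mkCollapsed t (reparamPath t 0 γ) (t * u) := by
  have hu : (lam2 (ofJoin t (t * u)) : ℝ) = t * u :=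
    lam2_ofJoin (mul_nonneg t.2.1 u.2.1) (mul_le_of_le_one_right t.2.1 u.2.2) t.2.2
  rw [toSimp2Rep, Simp2.toFibJoin3_mk, Simp2.toFibJoin3Rep]
  exact mk_congr (by simp) (ContinuousMap.ext fun v => by simp)
    (congrArg₂ FibJoin2.mk (Subtype.ext hu) (ContinuousMap.ext fun w => by simp))

def homotopyCollapse :
    (Simp2.toFibJoin3.comp toSimp2).Homotopy
      (FibJoin.mapRight (FibJoin2.collapse (X := X)) FibJoin2.fibJoinProj_collapse) :=
  .quotLift (fun s q => mkCollapsed q.1.1 (reparamPath q.1.1 s q.1.2.1)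
      (clampI ((1 - s) * (q.1.1 * FibJoin.param q.1.2.2.2) + s * FibJoin.param q.1.2.2.2)))
    (by unfold mkCollapsed reparamPath; fun_prop)
    (by
      rintro s a b (⟨ha, hb, h⟩ | ⟨ha, hb, h⟩)
      · rw [ha, hb]
        exact mk_zero_eq (by simpa [a.2.1, b.2.1] using h)
      · rw [ha, hb, h]
        refine mk_one_eq (congrArg (FibJoin2.mk _) (ContinuousMap.ext fun _ => ?_))
        simpa using a.2.2.trans (h ▸ b.2.2.symm))
    (fun q => by
      rw [ContinuousMap.comp_apply, toSimp2_mk, toFibJoin3_toSimp2Rep]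
      exact congrArg _ (by simpa using projIcc_val zero_le_one (q.1.1 * FibJoin.param q.1.2.2.2)))
    (fun q => by
      rw [mapRight_collapse_mk]
      exact mk_congr rfl (ContinuousMap.ext fun v => by simp) (by simp))

lemma fibJoinProj_homotopyCollapse (s : I) (x : FibJoin3 X) :
    fibJoinProj _ _ (homotopyCollapse (s, x)) = fibJoinProj _ _ x := by
  induction x using Quot.ind with
  | mk q => exact congrArg q.1.2.1 (by simp [← add_mul])

def roundTripHomotopy :
    (Simp2.toFibJoin3.comp toSimp2).Homotopy (ContinuousMap.id (FibJoin3 X)) :=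
  homotopyCollapse.trans ((FibJoin.homotopyMapRight FibJoin2.collapseHomotopy
    FibJoin2.fibJoinProj_collapseHomotopy).cast rfl FibJoin.mapRight_id)

lemma fibJoinProj_roundTripHomotopy (s : I) (x : FibJoin3 X) :
    fibJoinProj _ _ (roundTripHomotopy (s, x)) = fibJoinProj _ _ x := by
  rw [roundTripHomotopy, Homotopy.trans_apply]
  split_ifs
  · exact fibJoinProj_homotopyCollapse _ x
  · exact FibJoin.fibJoinProj_homotopyMapRight _ FibJoin2.fibJoinProj_collapseHomotopy _ x

end FibJoin3

end

/-- `Simp₂X` is homotopy equivalent over `X` to `X *_X (X *_X X)`, where `X` is an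
`X`-space via the identity map: there are maps of `X`-spaces in both directions whose
composites are homotopic to the identities through maps over `X`. -/
theorem simp2_homotopyEquiv_over (X : Type) [TopologicalSpace X] :
    ∃ (f : C(Simp2 X, FibJoin (ContinuousMap.id X)
        (fibJoinProj (ContinuousMap.id X) (ContinuousMap.id X))))
      (g : C(FibJoin (ContinuousMap.id X)
        (fibJoinProj (ContinuousMap.id X) (ContinuousMap.id X)), Simp2 X))
      (H : (g.comp f).Homotopy (ContinuousMap.id (Simp2 X)))
      (K : (f.comp g).Homotopy (ContinuousMap.id (FibJoin (ContinuousMap.id X)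
        (fibJoinProj (ContinuousMap.id X) (ContinuousMap.id X))))),
      (∀ a, fibJoinProj (ContinuousMap.id X)
          (fibJoinProj (ContinuousMap.id X) (ContinuousMap.id X)) (f a) = simp2Proj X a) ∧
      (∀ b, simp2Proj X (g b) = fibJoinProj (ContinuousMap.id X)
          (fibJoinProj (ContinuousMap.id X) (ContinuousMap.id X)) b) ∧
      (∀ (t : unitInterval) (a : Simp2 X), simp2Proj X (H (t, a)) = simp2Proj X a) ∧
      (∀ (t : unitInterval) (b : FibJoin (ContinuousMap.id X)
          (fibJoinProj (ContinuousMap.id X) (ContinuousMap.id X))),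
        fibJoinProj (ContinuousMap.id X)
          (fibJoinProj (ContinuousMap.id X) (ContinuousMap.id X)) (K (t, b)) =
        fibJoinProj (ContinuousMap.id X)
          (fibJoinProj (ContinuousMap.id X) (ContinuousMap.id X)) b) := by
  exact ⟨Simp2.toFibJoin3, FibJoin3.toSimp2, Simp2.roundTripHomotopy,
    FibJoin3.roundTripHomotopy, Simp2.fibJoinProj_toFibJoin3, FibJoin3.simp2Proj_toSimp2,
    Simp2.simp2Proj_roundTripHomotopy, FibJoin3.fibJoinProj_roundTripHomotopy⟩
end

section
/- Let X be a topological space, regarded as an X-space via the identity map. For every n ≥ 1, the structure map of the left-iterated fiberwise join X^{*n} := ((X *_X X) *_X ⋯) *_X X (evaluation at the distinguished point, with X^{*1} = X) is a homotopy equivalence X^{*n} → X. In particular, for n = 2 the evaluation map X *_X X → X, [t, γ, x, x'] ↦ γ(t), is a homotopy equivalence. -/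
/-!
STATEMENT 4: For every `n ≥ 1`, the structure map of the left-iterated fiberwise join
`X^{*n}` (with `X^{*1} = X`, regarded as an `X`-space via the identity) is a homotopy
equivalence `X^{*n} → X`.
-/

open unitInterval

variable {X Y Z : Type} [TopologicalSpace X] [TopologicalSpace Y] [TopologicalSpace Z]

/-- A space over `X`: a topological space together with a continuous map to `X`. -/
structure OverSpace (X : Type) [TopologicalSpace X] where
  carrier : Type
  top : TopologicalSpace carrier
  proj : @ContinuousMap carrier X top _

attribute [instance] OverSpace.top

/-- The left-iterated fiberwise join: `iterJoin X n` is `X^{*(n+1)}`, so that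
`iterJoin X 0 = X^{*1} = X` (projection the identity) and
`iterJoin X (n+1) = (iterJoin X n) *_X X`, with structure map the evaluation at the
distinguished point. -/
noncomputable def iterJoin (X : Type) [TopologicalSpace X] : ℕ → OverSpace X
  | 0 => ⟨X, inferInstance, ContinuousMap.id X⟩
  | n + 1 =>
    ⟨FibJoin (iterJoin X n).proj (ContinuousMap.id X), inferInstance,
      fibJoinProj (iterJoin X n).proj (ContinuousMap.id X)⟩

/-
If `p : Y → X` has a section `s`, then `Y *_X X` deformation retracts onto the image of
`x ↦ [1, const x, s x, x]`, which is a section of the evaluation map. The deformation first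
shrinks the path `γ` of `[t, γ, y, z]` to `γ` stopped at time `t` (dragging `z` back to `γ t`),
and then slides `t` to `1`, where the class of a point only remembers its last coordinate.
Since that section is again a continuous section of the next structure map, the argument
iterates.
-/

namespace unitInterval

noncomputable def ramp (u : I) : I := Set.projIcc 0 1 zero_le_one (1 - 2 * u)

@[fun_prop]
lemma continuous_ramp : Continuous ramp :=
  continuous_projIcc.comp (by fun_prop)

@[simp] lemma ramp_zero : ramp 0 = 1 := by
  simp [ramp]

@[simp] lemma ramp_one : ramp 1 = 0 := by
  rw [ramp, Set.projIcc_of_le_left] <;> norm_num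

lemma ramp_eq_zero_or_ramp_symm_eq_zero (u : I) : ramp u = 0 ∨ ramp (σ u) = 0 := by
  rcases le_total (u : ℝ) (1 / 2) with hu | hu
  · exact .inr (Set.projIcc_of_le_left _ (by rw [coe_symm_eq]; linarith))
  · exact .inl (Set.projIcc_of_le_left _ (by linarith))

end unitInterval

open unitInterval

noncomputable def pathStoppedAt : C(C(I, X) × I, C(I, X)) :=
  ContinuousMap.curry ⟨fun p => p.1.1 (min p.2 p.1.2), by fun_prop⟩

@[simp] lemma pathStoppedAt_apply (γ : C(I, X)) (c s : I) :
    pathStoppedAt (γ, c) s = γ (min s c) := rfl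

lemma joinPre_ext {pY : C(Y, X)} {pZ : C(Z, X)} {a b : JoinPre pY pZ} (ht : a.1.1 = b.1.1)
    (hγ : a.1.2.1 = b.1.2.1) (hy : a.1.2.2.1 = b.1.2.2.1) (hz : a.1.2.2.2 = b.1.2.2.2) :
    a = b :=
  Subtype.ext (Prod.ext ht (Prod.ext hγ (Prod.ext hy hz)))

section JoinWithBase

variable (pY : C(Y, X))

local notation "P" => JoinPre pY (ContinuousMap.id X)

/- For `u ≤ 1/2` the path is stopped at `max t (1 - 2u)`, for `u ≥ 1/2` the parameter moves
to `max t (2u - 1)`. -/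
noncomputable def fibJoinDeformation : C(I × P, P) where
  toFun p :=
    let c := max p.2.1.1 (ramp p.1)
    ⟨(max p.2.1.1 (ramp (σ p.1)), pathStoppedAt (p.2.1.2.1, c), p.2.1.2.2.1, p.2.1.2.1 c),
      by simpa using p.2.2.1, by simp [c, le_one']⟩
  continuous_toFun := by
    apply Continuous.subtype_mk
    fun_prop

@[simp] lemma fibJoinDeformation_fst (u : I) (q : P) :
    (fibJoinDeformation pY (u, q)).1.1 = max q.1.1 (ramp (σ u)) := rfl

@[simp] lemma fibJoinDeformation_path (u : I) (q : P) :
    (fibJoinDeformation pY (u, q)).1.2.1 = pathStoppedAt (q.1.2.1, max q.1.1 (ramp u)) := rfl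

@[simp] lemma fibJoinDeformation_base (u : I) (q : P) :
    (fibJoinDeformation pY (u, q)).1.2.2.1 = q.1.2.2.1 := rfl

@[simp] lemma fibJoinDeformation_end (u : I) (q : P) :
    (fibJoinDeformation pY (u, q)).1.2.2.2 = q.1.2.1 (max q.1.1 (ramp u)) := rfl

lemma fibJoinDeformation_zero (q : P) : fibJoinDeformation pY (0, q) = q := by
  refine joinPre_ext (by simp) (ContinuousMap.ext fun s => by simp [le_one']) rfl ?_
  simpa [le_one'] using q.2.2

lemma fibJoinDeformation_mk_eq {a b : P} (h : JoinRel pY (ContinuousMap.id X) a b) (u : I) :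
    Quot.mk (JoinRel pY (ContinuousMap.id X)) (fibJoinDeformation pY (u, a)) =
      Quot.mk _ (fibJoinDeformation pY (u, b)) := by
  rcases h with ⟨ha, hb, hy⟩ | ⟨ha, hb, hz⟩
  · -- at `t = 0` either `t` has not started to slide, or the path is already constant
    rcases ramp_eq_zero_or_ramp_symm_eq_zero u with hu | hu
    · congr 1
      refine joinPre_ext (by simp [ha, hb]) (ContinuousMap.ext fun s => ?_) hy ?_ <;>
        simp [ha, hb, hu, a.2.1, b.2.1, hy]
    · exact Quot.sound (Or.inl ⟨by simp [ha, hu], by simp [hb, hu], hy⟩)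
  · refine Quot.sound (Or.inr ⟨by simp [ha, le_one'], by simp [hb, le_one'], ?_⟩)
    simpa [ha, hb, a.2.2, b.2.2, le_one'] using hz

variable (s : C(X, Y)) (hs : ∀ x, pY (s x) = x)

noncomputable def fibJoinSection : C(X, FibJoin pY (ContinuousMap.id X)) where
  toFun x := Quot.mk _ ⟨(1, .const I x, s x, x), (hs x).symm, rfl⟩
  continuous_toFun := continuous_quot_mk.comp (by fun_prop)

lemma fibJoinProj_comp_fibJoinSection :
    (fibJoinProj pY (ContinuousMap.id X)).comp (fibJoinSection pY s hs) = .id X :=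
  rfl

/- For `u ≤ 1/2` the path is stopped at `max t (1 - 2u)`, for `u ≥ 1/2` the parameter moves
to `max t (2u - 1)`. -/
noncomputable def fibJoinDeformationRetraction :
    (ContinuousMap.id (FibJoin pY (ContinuousMap.id X))).Homotopy
      ((fibJoinSection pY s hs).comp (fibJoinProj pY (ContinuousMap.id X))) where
  toFun p := Quot.lift (fun q => Quot.mk _ (fibJoinDeformation pY (p.1, q)))
    (fun _ _ h => fibJoinDeformation_mk_eq pY h p.1) p.2
  continuous_toFun := isQuotientMap_quot_mk.continuous_lift_prod_right
    (continuous_quot_mk.comp (fibJoinDeformation pY).continuous)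
  map_zero_left := Quot.ind fun q => congrArg _ (fibJoinDeformation_zero pY q)
  map_one_left := Quot.ind fun q =>
    Quot.sound (Or.inr ⟨by simp [le_one'], rfl, by simp [fibJoinProj]⟩)

noncomputable def fibJoinProjHomotopyEquiv :
    ContinuousMap.HomotopyEquiv (FibJoin pY (ContinuousMap.id X)) X where
  toFun := fibJoinProj pY (ContinuousMap.id X)
  invFun := fibJoinSection pY s hs
  left_inv := ⟨(fibJoinDeformationRetraction pY s hs).symm⟩
  right_inv := by rw [fibJoinProj_comp_fibJoinSection]

end JoinWithBase

theorem iterJoin_exists_section (X : Type) [TopologicalSpace X] :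
    ∀ n, ∃ s : C(X, (iterJoin X n).carrier), ∀ x, (iterJoin X n).proj (s x) = x
  | 0 => ⟨.id X, fun _ => rfl⟩
  | n + 1 =>
    let ⟨s, hs⟩ := iterJoin_exists_section X n
    ⟨fibJoinSection _ s hs, fun _ => rfl⟩

/-- For every `n ≥ 1` the structure map `X^{*n} → X` of the left-iterated fiberwise join
is a homotopy equivalence.  (Here `iterJoin X n` is `X^{*(n+1)}`, so quantifying over all
`n : ℕ` covers exactly the joins `X^{*n}` with `n ≥ 1`; the case `n = 0` of `iterJoin`
is `X^{*2} = X *_X X` with the evaluation map `[t, γ, x, x'] ↦ γ t`.) -/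
theorem iterJoin_proj_homotopyEquiv (X : Type) [TopologicalSpace X] (n : ℕ) :
    ∃ h : ContinuousMap.HomotopyEquiv (iterJoin X n).carrier X,
      h.toFun = (iterJoin X n).proj := by
  cases n with
  | zero => exact ⟨.refl X, rfl⟩
  | succ n =>
    obtain ⟨s, hs⟩ := iterJoin_exists_section X n
    exact ⟨fibJoinProjHomotopyEquiv _ s hs, rfl⟩
end
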